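/- Let G be a graph with v_G vertices and e_G ≥ 1 edges and no isolated vertices, let n ≥ v_G and p ∈ (0,1), q = 1 − p. Then the normalized subgraph count admits the chaos representation Ñ_G^n = (N_G^n − E[N_G^n])/√(Var[N_G^n]) = Σ_{k=1}^{e_G} I_k(f_k), where f_k(b_1,…,b_k) = q^{k/2} p^{e_G−k/2} / ((e_G−k)! · k! · √(Var[N_G^n])) · g_k(b_1,…,b_k). -/

import Mathlib

/-!
The identity holds pointwise in `ω`. The set `E_G` of admissible edge tuples is finite and closed
under permutations of positions, and each copy of `G` is listed by exactly `e_G!` of its tuples,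
so `e_G! N_G = ∑_{b ∈ E_G} ∏_i 1{X_{b_i} = 1}`. Substituting `1{X_j = 1} = p + √(pq) Y_j`
and expanding the product, permutation invariance makes every `k`-subset of positions contribute the
same sum `∑_{b ∈ E_G} ∏_{i > e_G - k} Y_{b_i}`, which is `I_k(g_k)`. Hence
`e_G! N_G = ∑_{k=0}^{e_G} C(e_G, k) p^{e_G-k} (pq)^{k/2} I_k(g_k)`; independence identifies the
`k = 0` term `p^{e_G} |E_G|` with `e_G! E[N_G]`, and `C(e_G, k) / e_G! = 1 / (k! (e_G - k)!)`.
-/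

open MeasureTheory ProbabilityTheory Filter Finset

noncomputable section

namespace PaperC

/-- The sample space `Ω = {-1,1}^ℕ`, coded by `Bool` (`true ↦ +1`). -/
abbrev SeqSpace := ℕ → Bool

/-- The coordinate Bernoulli variables with values `±1`. -/
def Xc (k : ℕ) (ω : SeqSpace) : ℝ := if ω k then 1 else -1

/-- The centered, normalized variables `Y_k = (q - p + X_k)/(2√(pq))`. -/
def Yc (p : ℝ) (k : ℕ) (ω : SeqSpace) : ℝ :=
  ((1 - p) - p + Xc k ω) / (2 * Real.sqrt (p * (1 - p)))

/-- The discrete multiple stochastic integral of order `k`. -/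
def MI (p : ℝ) (k : ℕ) (f : (Fin k → ℕ) → ℝ) (ω : SeqSpace) : ℝ :=
  ∑' i : Fin k → ℕ, f i * ∏ j : Fin k, Yc p (i j) ω

/-- `μ` makes the coordinates i.i.d. Bernoulli with `P(X_k = 1) = p`. -/
structure IsBernoulliSeq (μ : Measure SeqSpace) (p : ℝ) : Prop where
  prob : IsProbabilityMeasure μ
  indep : iIndepFun (fun k (ω : SeqSpace) => ω k) μ
  marginal : ∀ k, μ {ω | ω k = true} = ENNReal.ofReal p

/-- Concatenation of three tuples (of announced length `d`; genuine when `d = a+b+c`). -/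
def glue {a b c d : ℕ} (x : Fin a → ℕ) (y : Fin b → ℕ) (z : Fin c → ℕ) : Fin d → ℕ :=
  fun i => if h1 : (i : ℕ) < a then x ⟨i, h1⟩
    else if h2 : (i : ℕ) - a < b then y ⟨(i : ℕ) - a, h2⟩
    else if h3 : (i : ℕ) - a - b < c then z ⟨(i : ℕ) - a - b, h3⟩ else 0

/-- The contraction `f ⋆_k^l g`. -/
def contr (n m k l : ℕ) (f : (Fin n → ℕ) → ℝ) (g : (Fin m → ℕ) → ℝ)
    (y : Fin (k - l) → ℕ) (s : Fin (n - k) → ℕ) (t : Fin (m - k) → ℕ) : ℝ :=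
  ∑' x : Fin l → ℕ, f (glue x y s) * g (glue x y t)

/-- The squared `ℓ²` norm `‖f ⋆_k^l g‖²`. -/
def contrNormSq (n m k l : ℕ) (f : (Fin n → ℕ) → ℝ) (g : (Fin m → ℕ) → ℝ) : ℝ :=
  ∑' q : (Fin (k - l) → ℕ) × (Fin (n - k) → ℕ) × (Fin (m - k) → ℕ),
    (contr n m k l f g q.1 q.2.1 q.2.2) ^ 2

/-- Concatenation of two tuples (of announced length `c`; genuine when `c = a+b`). -/
def pairGlue {a b c : ℕ} (x : Fin a → ℕ) (y : Fin b → ℕ) : Fin c → ℕ :=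
  fun i => if h1 : (i : ℕ) < a then x ⟨i, h1⟩
    else if h2 : (i : ℕ) - a < b then y ⟨(i : ℕ) - a, h2⟩ else 0

/-- `G` has no isolated vertices. -/
def NoIsolatedVertices {V : Type*} (G : SimpleGraph V) : Prop :=
  ∀ v : V, ∃ w : V, G.Adj v w

/-- `edge` enumerates the (non-diagonal) edges of the complete graph `K_n`
by the initial segment `{0, …, M-1}` of `ℕ`. -/
structure IsEdgeEnum (n : ℕ) (edge : ℕ → Sym2 (Fin n)) (M : ℕ) : Prop where
  nondiag : ∀ j, j < M → ¬ (edge j).IsDiag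
  inj : ∀ j1, j1 < M → ∀ j2, j2 < M → edge j1 = edge j2 → j1 = j2
  surj : ∀ e : Sym2 (Fin n), ¬ e.IsDiag → ∃ j, j < M ∧ edge j = e

/-- `E_G ⊆ ℕ^{e_G}`: tuples of indices of pairwise distinct edges of `K_n`
whose union forms a graph isomorphic to `G`. -/
def EGset {V : Type*} (G : SimpleGraph V) (n : ℕ) (edge : ℕ → Sym2 (Fin n))
    (M eG : ℕ) : Set (Fin eG → ℕ) :=
  {b | Function.Injective b ∧ (∀ i, b i < M) ∧
    ∃ φ : V ↪ Fin n, (Set.range fun i => edge (b i)) = Sym2.map φ '' G.edgeSet}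

/-- `g_k(b) = Σ_{a ∈ ℕ^{e_G - k}} 1_{E_G}(a, b)`. -/
def gker {V : Type*} (G : SimpleGraph V) (n : ℕ) (edge : ℕ → Sym2 (Fin n))
    (M eG k : ℕ) (b : Fin k → ℕ) : ℝ :=
  ∑' a : Fin (eG - k) → ℕ,
    (EGset G n edge M eG).indicator (fun _ => (1 : ℝ)) (pairGlue a b)

/-- `N_G^n(ω)`: the number of subgraphs of the realized random graph isomorphic
to `G`, counted as index sets of edge subsets forming a copy of `G`. -/
def NGcount {V : Type*} (G : SimpleGraph V) (n : ℕ) (edge : ℕ → Sym2 (Fin n))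
    (M eG : ℕ) (ω : SeqSpace) : ℕ :=
  Nat.card {S : Set ℕ //
    (∃ b : Fin eG → ℕ, b ∈ EGset G n edge M eG ∧ S = Set.range b) ∧
    ∀ j ∈ S, ω j = true}

section TupleSplit

variable {e k : ℕ}

def splitEquiv (hk : k ≤ e) : (Fin (e - k) → ℕ) × (Fin k → ℕ) ≃ (Fin e → ℕ) :=
  (Fin.appendEquiv (e - k) k).trans
    (Equiv.arrowCongr (finCongr (Nat.sub_add_cancel hk)) (Equiv.refl ℕ))

lemma splitEquiv_apply (hk : k ≤ e) (a : Fin (e - k) → ℕ) (c : Fin k → ℕ) :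
    splitEquiv hk (a, c) = pairGlue a c := by
  funext i
  obtain ⟨i, rfl⟩ := (finCongr (Nat.sub_add_cancel hk)).surjective i
  refine Fin.addCases (fun j => ?_) (fun j => ?_) i
  · simp [splitEquiv, pairGlue]
  · simp [splitEquiv, pairGlue]

def lastIdx (e k : ℕ) : Finset (Fin e) := {i | e - k ≤ (i : ℕ)}

lemma lastIdx_eq_map (hk : k ≤ e) :
    lastIdx e k = Finset.univ.map
      ((Fin.natAddEmb (e - k)).trans (finCongr (Nat.sub_add_cancel hk)).toEmbedding) := by
  ext i
  simp only [lastIdx, Finset.mem_filter, Finset.mem_univ, true_and, Finset.mem_map,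
    Function.Embedding.trans_apply, Fin.natAddEmb_apply, Equiv.coe_toEmbedding, finCongr_apply]
  constructor
  · intro h
    exact ⟨⟨i - (e - k), by omega⟩, Fin.ext (by simp; omega)⟩
  · rintro ⟨j, rfl⟩
    simp

lemma prod_lastIdx {M : Type*} [CommMonoid M] (hk : k ≤ e) (F : ℕ → M) (d : Fin e → ℕ) :
    ∏ i ∈ lastIdx e k, F (d i) = ∏ j, F (((splitEquiv hk).symm d).2 j) := by
  rw [lastIdx_eq_map hk, Finset.prod_map]
  simp [splitEquiv]

lemma card_lastIdx (hk : k ≤ e) : (lastIdx e k).card = k := by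
  simp [lastIdx_eq_map hk]

end TupleSplit

section SymmetricSums

variable {α R : Type*} [CommSemiring R] {e : ℕ}

def IsPermClosed (B : Set (Fin e → α)) : Prop :=
  ∀ σ : Equiv.Perm (Fin e), ∀ b ∈ B, b ∘ σ ∈ B

/-- For `B = E_G` this is `I_k(g_k)`, see `MI_const_mul_gker`. -/
def tailProdSum (B : Finset (Fin e → α)) (Y : α → R) (k : ℕ) : R :=
  ∑ b ∈ B, ∏ i ∈ lastIdx e k, Y (b i)

lemma tailProdSum_zero (B : Finset (Fin e → α)) (Y : α → R) :
    tailProdSum B Y 0 = B.card := by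
  simp [tailProdSum, Finset.card_eq_zero.mp (card_lastIdx (Nat.zero_le e))]

variable {B : Finset (Fin e → α)}

lemma sum_prod_comp_perm (hB : IsPermClosed (B : Set (Fin e → α)))
    (σ : Equiv.Perm (Fin e)) (T : Finset (Fin e)) (Y : α → R) :
    ∑ b ∈ B, ∏ i ∈ T, Y (b (σ i)) = ∑ b ∈ B, ∏ i ∈ T, Y (b i) :=
  Finset.sum_nbij' (· ∘ σ) (· ∘ σ.symm) (fun b hb => hB σ b hb)
    (fun b hb => hB σ.symm b hb)
    (fun b _ => by ext; simp) (fun b _ => by ext; simp) (fun _ _ => rfl)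

lemma sum_prod_eq_tailProdSum (hB : IsPermClosed (B : Set (Fin e → α)))
    {k : ℕ} (hk : k ≤ e) {T : Finset (Fin e)} (hT : T.card = k) (Y : α → R) :
    ∑ b ∈ B, ∏ i ∈ T, Y (b i) = tailProdSum B Y k := by
  obtain ⟨σ, hσ⟩ :=
    Equiv.Perm.exists_map_finset_eq (lastIdx e k) T (by rw [card_lastIdx hk, hT])
  simp_rw [tailProdSum, ← hσ, Finset.prod_map]
  exact sum_prod_comp_perm hB σ _ Y

lemma sum_prod_add_eq (hB : IsPermClosed (B : Set (Fin e → α))) (p s : R) (Y : α → R) :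
    ∑ b ∈ B, ∏ i, (p + s * Y (b i))
      = ∑ k ∈ Finset.range (e + 1), e.choose k * p ^ (e - k) * s ^ k * tailProdSum B Y k := by
  calc ∑ b ∈ B, ∏ i, (p + s * Y (b i))
      = ∑ b ∈ B, ∑ T ∈ Finset.univ.powerset,
          (∏ i ∈ T, s * Y (b i)) * ∏ _i ∈ Finset.univ \ T, p := by
        simp_rw [add_comm p, Finset.prod_add]
    _ = ∑ k ∈ Finset.range (e + 1), ∑ T ∈ Finset.powersetCard k Finset.univ,
          p ^ (e - k) * s ^ k * ∑ b ∈ B, ∏ i ∈ T, Y (b i) := by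
        rw [Finset.sum_comm, Finset.sum_powerset, Finset.card_univ, Fintype.card_fin]
        refine Finset.sum_congr rfl fun k _ => Finset.sum_congr rfl fun T hT => ?_
        rw [Finset.mem_powersetCard] at hT
        simp_rw [Finset.mul_sum, Finset.prod_mul_distrib, Finset.prod_const,
          Finset.card_sdiff_of_subset hT.1, Finset.card_univ, Fintype.card_fin, hT.2]
        exact Finset.sum_congr rfl fun _ _ => by ring
    _ = _ := by
        refine Finset.sum_congr rfl fun k hk => ?_
        rw [Finset.mem_range, Nat.lt_succ_iff] at hk
        rw [Finset.sum_congr rfl fun T hT => by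
            rw [sum_prod_eq_tailProdSum hB hk (Finset.mem_powersetCard.mp hT).2],
          Finset.sum_const, Finset.card_powersetCard, Finset.card_univ, Fintype.card_fin,
          nsmul_eq_mul]
        ring

end SymmetricSums

lemma tsum_indicator_pairGlue_mul_prod {e k : ℕ} (B : Finset (Fin e → ℕ)) (hk : k ≤ e)
    (Y : ℕ → ℝ) :
    ∑' c : Fin k → ℕ,
        (∑' a : Fin (e - k) → ℕ,
            (B : Set (Fin e → ℕ)).indicator (fun _ => 1) (pairGlue a c)) * ∏ j, Y (c j)
      = tailProdSum B Y k := by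
  set E := (Equiv.prodComm _ _).trans (splitEquiv hk)
  set h := (B : Set (Fin e → ℕ)).indicator fun d => ∏ j, Y (((splitEquiv hk).symm d).2 j)
  have hglue : ∀ c a,
      (B : Set (Fin e → ℕ)).indicator (fun _ => 1) (pairGlue a c) * ∏ j, Y (c j)
        = h (E (c, a)) := by
    intro c a
    rw [← splitEquiv_apply hk]
    by_cases hd : splitEquiv hk (a, c) ∈ B <;> simp [h, E, hd]
  have hsum : Summable (h ∘ E) := by
    refine summable_of_hasFiniteSupport ((B.finite_toSet.preimage E.injective.injOn).subset ?_)
    exact fun x hx => Set.mem_of_indicator_ne_zero (s := (B : Set (Fin e → ℕ)))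
      (f := fun d => ∏ j, Y (((splitEquiv hk).symm d).2 j)) hx
  calc _ = ∑' c, ∑' a, h (E (c, a)) := by simp_rw [← tsum_mul_right, hglue]
    _ = ∑' x, h (E x) := hsum.tsum_prod.symm
    _ = ∑' d, h d := E.tsum_eq h
    _ = ∑ d ∈ B, ∏ j, Y (((splitEquiv hk).symm d).2 j) := (sum_eq_tsum_indicator _ _).symm
    _ = tailProdSum B Y k := by simp_rw [tailProdSum, prod_lastIdx hk]

/-- The tuples are in bijection with the pairs (range, ordering of the range). -/
lemma natCard_ranges_mul_factorial {α : Type*} {e : ℕ} (B : Set (Fin e → α))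
    (hinj : ∀ b ∈ B, Function.Injective b)
    (hperm : IsPermClosed B) (P : α → Prop) :
    Nat.card {S : Set α // (∃ b, b ∈ B ∧ S = Set.range b) ∧ ∀ j ∈ S, P j} * e.factorial
      = Nat.card {b // b ∈ B ∧ ∀ i, P (b i)} := by
  set Copy := {S : Set α // (∃ b, b ∈ B ∧ S = Set.range b) ∧ ∀ j ∈ S, P j}
  choose rep hrepB hrep using fun S : Copy => S.2.1
  let Φ : Copy × Equiv.Perm (Fin e) → {b // b ∈ B ∧ ∀ i, P (b i)} := fun x =>
    ⟨rep x.1 ∘ x.2, hperm _ _ (hrepB x.1),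
      fun i => x.1.2.2 _ (hrep x.1 ▸ Set.mem_range_self _)⟩
  have hΦ : Function.Bijective Φ := by
    constructor
    · rintro ⟨S, σ⟩ ⟨S', σ'⟩ h
      have hv : rep S ∘ σ = rep S' ∘ σ' := congrArg Subtype.val h
      obtain rfl : S = S' := Subtype.ext <| by
        rw [hrep S, hrep S', ← σ.surjective.range_comp (rep S),
          ← σ'.surjective.range_comp (rep S'), hv]
      rw [Equiv.ext fun i => hinj _ (hrepB S) (congrFun hv i)]
    · rintro ⟨b, hbB, hbP⟩
      let S : Copy := ⟨Set.range b, ⟨b, hbB, rfl⟩, by rintro j ⟨i, rfl⟩; exact hbP i⟩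
      let σ : Equiv.Perm (Fin e) := (Equiv.ofInjective b (hinj b hbB)).trans
        ((Equiv.setCongr (hrep S)).trans (Equiv.ofInjective _ (hinj _ (hrepB S))).symm)
      refine ⟨(S, σ), Subtype.ext (funext fun i => ?_)⟩
      simp [Φ, σ, Equiv.apply_ofInjective_symm]
  rw [← Nat.card_congr (Equiv.ofBijective Φ hΦ), Nat.card_prod, Nat.card_perm, Nat.card_fin]

lemma EGset_finite {V : Type*} (G : SimpleGraph V) (n M eG : ℕ) (edge : ℕ → Sym2 (Fin n)) :
    (EGset G n edge M eG).Finite :=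
  (Set.Finite.pi fun _ => Set.finite_Iio M).subset fun _ hb => Set.mem_univ_pi.mpr hb.2.1

lemma EGset_isPermClosed {V : Type*} (G : SimpleGraph V) (n : ℕ) (edge : ℕ → Sym2 (Fin n))
    (M eG : ℕ) : IsPermClosed (EGset G n edge M eG) := by
  rintro σ b ⟨hinj, hlt, φ, hφ⟩
  refine ⟨hinj.comp σ.injective, fun i => hlt _, φ, ?_⟩
  rw [← hφ]
  exact σ.surjective.range_comp fun i => edge (b i)

lemma NGcount_mul_factorial {V : Type*} (G : SimpleGraph V) (n : ℕ) (edge : ℕ → Sym2 (Fin n))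
    (M eG : ℕ) (ω : SeqSpace) :
    (NGcount G n edge M eG ω : ℝ) * eG.factorial
      = ∑ b ∈ (EGset_finite G n M eG edge).toFinset, ∏ i, if ω (b i) then 1 else 0 := by
  have hcount := natCard_ranges_mul_factorial (EGset G n edge M eG) (fun _ hb => hb.1)
    (EGset_isPermClosed G n edge M eG) (fun j => ω j = true)
  have hgood : Nat.card {b // b ∈ EGset G n edge M eG ∧ ∀ i, ω (b i) = true}
      = ((EGset_finite G n M eG edge).toFinset.filter fun b => ∀ i, ω (b i) = true).card := by
    rw [← Nat.card_eq_finsetCard]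
    exact Nat.card_congr (Equiv.subtypeEquivRight fun b => by simp)
  rw [hgood, Finset.card_filter] at hcount
  simp_rw [Fintype.prod_boole]
  exact_mod_cast hcount

lemma ite_eq_add_sqrt_mul_Yc {p : ℝ} (hp0 : 0 < p) (hp1 : p < 1) (j : ℕ) (ω : SeqSpace) :
    (if ω j then 1 else 0 : ℝ) = p + Real.sqrt (p * (1 - p)) * Yc p j ω := by
  have hs : Real.sqrt (p * (1 - p)) ≠ 0 := (Real.sqrt_pos.mpr (by nlinarith)).ne'
  rcases Bool.eq_false_or_eq_true (ω j) with h | h <;> simp [Yc, Xc, h] <;> field_simp <;> ring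

section Bernoulli

variable {μ : Measure SeqSpace} {p : ℝ} {e : ℕ}

lemma measure_forall_eq_true (hμ : IsBernoulliSeq μ p) {b : Fin e → ℕ}
    (hb : Function.Injective b) :
    μ {ω | ∀ i, ω (b i) = true} = ENNReal.ofReal p ^ e := by
  classical
  have hset : {ω : SeqSpace | ∀ i, ω (b i) = true}
      = ⋂ j ∈ Finset.univ.image b, {ω | ω j = true} := by
    ext ω
    simp
  rw [hset,
    hμ.indep.meas_biInter fun j _ => ⟨{true}, measurableSet_singleton true, by ext; simp⟩,
    Finset.prod_congr rfl fun j _ => hμ.marginal j, Finset.prod_const,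
    Finset.card_image_of_injective _ hb, Finset.card_univ, Fintype.card_fin]

lemma prod_ite_eq_indicator (b : Fin e → ℕ) :
    (fun ω : SeqSpace => ∏ i, if ω (b i) then (1 : ℝ) else 0)
      = {ω | ∀ i, ω (b i) = true}.indicator 1 := by
  ext ω
  simp [Fintype.prod_boole, Set.indicator_apply]

lemma measurableSet_forall_eq_true (b : Fin e → ℕ) :
    MeasurableSet {ω : SeqSpace | ∀ i, ω (b i) = true} := by
  simp only [Set.ofPred_forall]
  exact MeasurableSet.iInter fun i =>
    measurableSet_eq_fun (measurable_pi_apply (b i)) measurable_const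

lemma integral_prod_ite (hμ : IsBernoulliSeq μ p) (hp : 0 ≤ p) {b : Fin e → ℕ}
    (hb : Function.Injective b) :
    ∫ ω, ∏ i, (if ω (b i) then (1 : ℝ) else 0) ∂μ = p ^ e := by
  rw [prod_ite_eq_indicator, integral_indicator_one (measurableSet_forall_eq_true b),
    measureReal_def, measure_forall_eq_true hμ hb, ENNReal.toReal_pow, ENNReal.toReal_ofReal hp]

end Bernoulli

lemma MI_const_mul_gker {V : Type*} (G : SimpleGraph V) (n : ℕ) (edge : ℕ → Sym2 (Fin n))
    (M eG : ℕ) (p : ℝ) (ω : SeqSpace) {k : ℕ} (hk : k ≤ eG) (C : ℝ) :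
    MI p k (fun b => C * gker G n edge M eG k b) ω
      = C * tailProdSum (EGset_finite G n M eG edge).toFinset (fun j => Yc p j ω) k := by
  simp_rw [MI, gker, mul_assoc, tsum_mul_left]
  rw [← tsum_indicator_pairGlue_mul_prod _ hk, Set.Finite.coe_toFinset]

section Count

variable {V : Type*} (G : SimpleGraph V) (n : ℕ) (edge : ℕ → Sym2 (Fin n)) (M eG : ℕ)
  {μ : Measure SeqSpace} {p : ℝ}

lemma integral_NGcount (hμ : IsBernoulliSeq μ p) (hp : 0 ≤ p) :
    ∫ ω, (NGcount G n edge M eG ω : ℝ) ∂μ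
      = p ^ eG * (EGset_finite G n M eG edge).toFinset.card / eG.factorial := by
  have := hμ.prob
  have hN : ∀ ω, (NGcount G n edge M eG ω : ℝ)
      = (∑ b ∈ (EGset_finite G n M eG edge).toFinset, ∏ i, if ω (b i) then 1 else 0)
          / eG.factorial :=
    fun ω => eq_div_of_mul_eq (by positivity) (NGcount_mul_factorial G n edge M eG ω)
  simp_rw [hN]
  rw [integral_div, integral_finsetSum _ fun b _ => by
      rw [prod_ite_eq_indicator]
      exact (integrable_const 1).indicator (measurableSet_forall_eq_true b),
    Finset.sum_congr rfl fun b hb =>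
      integral_prod_ite hμ hp ((Set.Finite.mem_toFinset _).mp hb).1,
    Finset.sum_const, nsmul_eq_mul, mul_comm]

lemma NGcount_sub_integral (hμ : IsBernoulliSeq μ p) (hp0 : 0 < p) (hp1 : p < 1)
    (ω : SeqSpace) :
    (NGcount G n edge M eG ω : ℝ) - ∫ x, (NGcount G n edge M eG x : ℝ) ∂μ
      = ∑ k ∈ Finset.Icc 1 eG, eG.choose k * p ^ (eG - k) * Real.sqrt (p * (1 - p)) ^ k
          / eG.factorial
          * tailProdSum (EGset_finite G n M eG edge).toFinset (fun j => Yc p j ω) k := by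
  have hexp := NGcount_mul_factorial G n edge M eG ω
  simp_rw [ite_eq_add_sqrt_mul_Yc hp0 hp1] at hexp
  have hB : IsPermClosed ((EGset_finite G n M eG edge).toFinset : Set (Fin eG → ℕ)) := by
    simpa using EGset_isPermClosed G n edge M eG
  rw [sum_prod_add_eq hB p (Real.sqrt (p * (1 - p))) (fun j => Yc p j ω),
    Finset.sum_range_eq_add_Ico _ (by omega : 0 < eG + 1), Finset.Ico_add_one_right_eq_Icc,
    tailProdSum_zero] at hexp
  have hfac : (eG.factorial : ℝ) ≠ 0 := by positivity
  simp_rw [div_mul_eq_mul_div, ← Finset.sum_div]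
  rw [integral_NGcount G n edge M eG hμ hp0.le, eq_div_iff hfac, sub_mul, hexp,
    div_mul_cancel₀ _ hfac]
  simp

end Count

lemma chaos_coeff_eq {p : ℝ} (hp0 : 0 < p) (hp1 : p ≤ 1) {e k : ℕ} (hk : k ≤ e) :
    (1 - p) ^ ((k : ℝ) / 2) * p ^ ((e : ℝ) - k / 2) / ((e - k).factorial * k.factorial)
      = e.choose k * p ^ (e - k) * Real.sqrt (p * (1 - p)) ^ k / e.factorial := by
  have hq : 0 ≤ 1 - p := by linarith
  have hsqrt : Real.sqrt (p * (1 - p)) ^ k = p ^ ((k : ℝ) / 2) * (1 - p) ^ ((k : ℝ) / 2) := by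
    rw [Real.sqrt_eq_rpow, ← Real.rpow_natCast, ← Real.rpow_mul (by positivity),
      Real.mul_rpow hp0.le hq, one_div_mul_eq_div]
  have hpow : p ^ ((e : ℝ) - k / 2) = p ^ (e - k) * p ^ ((k : ℝ) / 2) := by
    rw [← Real.rpow_natCast, ← Real.rpow_add hp0, Nat.cast_sub hk]
    ring_nf
  rw [hsqrt, hpow, ← Nat.choose_mul_factorial_mul_factorial hk]
  have := (Nat.choose_pos hk).ne'
  push_cast
  field_simp

theorem chaos_representation_subgraph_count_general {V : Type} (G : SimpleGraph V)
    (n : ℕ) (edge : ℕ → Sym2 (Fin n))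
    (p : ℝ) (hp0 : 0 < p) (hp1 : p < 1)
    (μ : Measure SeqSpace) (hμ : IsBernoulliSeq μ p) :
    ∀ ω : SeqSpace,
      ((NGcount G n edge (Nat.choose n 2) G.edgeSet.ncard ω : ℝ)
          - ∫ x, (NGcount G n edge (Nat.choose n 2) G.edgeSet.ncard x : ℝ) ∂μ)
        / Real.sqrt (variance
            (fun x => (NGcount G n edge (Nat.choose n 2) G.edgeSet.ncard x : ℝ)) μ)
      = ∑ k ∈ Finset.Icc 1 G.edgeSet.ncard,
          MI p k (fun b : Fin k → ℕ =>
            (1 - p) ^ ((k : ℝ) / 2) * p ^ ((G.edgeSet.ncard : ℝ) - (k : ℝ) / 2)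
              / ((Nat.factorial (G.edgeSet.ncard - k) : ℝ) * (Nat.factorial k : ℝ)
                  * Real.sqrt (variance
                      (fun x =>
                        (NGcount G n edge (Nat.choose n 2) G.edgeSet.ncard x : ℝ)) μ))
              * gker G n edge (Nat.choose n 2) G.edgeSet.ncard k b) ω := by
  intro ω
  rw [NGcount_sub_integral G n edge _ _ hμ hp0 hp1 ω, Finset.sum_div]
  refine Finset.sum_congr rfl fun k hk => ?_
  have hke : k ≤ G.edgeSet.ncard := (Finset.mem_Icc.mp hk).2
  rw [MI_const_mul_gker G n edge _ _ p ω hke, ← div_div, chaos_coeff_eq hp0 hp1.le hke]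
  ring

/-- Lemma 4.1: the renormalized subgraph count admits the chaos
representation `Ñ_G = Σ_{k=1}^{e_G} I_k(f_k)` with
`f_k = q^{k/2} p^{e_G - k/2} g_k / ((e_G - k)! k! √Var[N_G])`. -/
theorem chaos_representation_subgraph_count {V : Type} [Fintype V] (G : SimpleGraph V)
    (hE : G.edgeSet.Nonempty) (hIso : NoIsolatedVertices G)
    (n : ℕ) (hn : Fintype.card V ≤ n)
    (edge : ℕ → Sym2 (Fin n)) (hedge : IsEdgeEnum n edge (Nat.choose n 2))
    (p : ℝ) (hp0 : 0 < p) (hp1 : p < 1)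
    (μ : Measure SeqSpace) (hμ : IsBernoulliSeq μ p) :
    ∀ ω : SeqSpace,
      ((NGcount G n edge (Nat.choose n 2) G.edgeSet.ncard ω : ℝ)
          - ∫ x, (NGcount G n edge (Nat.choose n 2) G.edgeSet.ncard x : ℝ) ∂μ)
        / Real.sqrt (variance
            (fun x => (NGcount G n edge (Nat.choose n 2) G.edgeSet.ncard x : ℝ)) μ)
      = ∑ k ∈ Finset.Icc 1 G.edgeSet.ncard,
          MI p k (fun b : Fin k → ℕ =>
            (1 - p) ^ ((k : ℝ) / 2) * p ^ ((G.edgeSet.ncard : ℝ) - (k : ℝ) / 2)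
              / ((Nat.factorial (G.edgeSet.ncard - k) : ℝ) * (Nat.factorial k : ℝ)
                  * Real.sqrt (variance
                      (fun x =>
                        (NGcount G n edge (Nat.choose n 2) G.edgeSet.ncard x : ℝ)) μ))
              * gker G n edge (Nat.choose n 2) G.edgeSet.ncard k b) ω :=
  chaos_representation_subgraph_count_general G n edge p hp0 hp1 μ hμ

end PaperC
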